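/- arXiv:2409.01277 — 2 statements merged into one kernel-verified Lean document; each statement's English description precedes it below -/
import Mathlib

section
/- Let K_P and K_D be n×n real symmetric positive definite matrices, and let A be the 2n×2n real block matrix A = [[0, I], [−K_P, −K_D]]. Then A is Hurwitz: every eigenvalue of A over ℂ has strictly negative real part. -/
/-!
An eigenvector `(x, y)` of `[[0, I], [-K_P, -K_D]]` for `μ` has `y = μ x` with `x ≠ 0`, and
`μ² x + μ K_D x + K_P x = 0`. Pairing with `x̄` gives `a μ² + b μ + c = 0` with
`a = x̄ᵀx`, `b = x̄ᵀK_D x`, `c = x̄ᵀK_P x` all positive reals (the complexification of a real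
positive definite matrix is positive definite), and such a quadratic has only roots in the open
left half-plane.
-/

open Matrix Complex ComplexOrder Module.End

theorem Complex.re_neg_of_quadratic_eq_zero {a b c μ : ℂ} (ha : 0 < a) (hb : 0 < b) (hc : 0 < c)
    (h : a * μ ^ 2 + b * μ + c = 0) : μ.re < 0 := by
  rw [Complex.pos_iff] at ha hb hc
  have hre := congrArg re h
  have him := congrArg im h
  simp only [pow_two, mul_re, mul_im, add_re, add_im, ← ha.2, ← hb.2, ← hc.2, zero_re,
    zero_im] at hre him
  by_contra! hμ
  have him0 : μ.im = 0 := by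
    have : μ.im * (2 * a.re * μ.re + b.re) = 0 := by linear_combination him
    exact (mul_eq_zero.mp this).resolve_right (by nlinarith)
  rw [him0] at hre
  nlinarith [mul_nonneg (mul_nonneg hμ hμ) ha.1.le, mul_nonneg hμ hb.1.le]

namespace Matrix

section Complexification

variable {n : Type*} [Fintype n]

theorem re_star_dotProduct_map_ofReal_mulVec (M : Matrix n n ℝ) (x : n → ℂ) :
    (star x ⬝ᵥ M.map ofReal *ᵥ x).re =
      (re ∘ x) ⬝ᵥ M *ᵥ (re ∘ x) + (im ∘ x) ⬝ᵥ M *ᵥ (im ∘ x) := by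
  simp only [dotProduct, mulVec, map_apply, Finset.mul_sum, re_sum, ← Finset.sum_add_distrib]
  simp [mul_re, mul_im]

theorem im_star_dotProduct_map_ofReal_mulVec (M : Matrix n n ℝ) (x : n → ℂ) :
    (star x ⬝ᵥ M.map ofReal *ᵥ x).im =
      (re ∘ x) ⬝ᵥ M *ᵥ (im ∘ x) - (im ∘ x) ⬝ᵥ M *ᵥ (re ∘ x) := by
  simp only [dotProduct, mulVec, map_apply, Finset.mul_sum, im_sum, ← Finset.sum_sub_distrib]
  simp [mul_re, mul_im, ← sub_eq_add_neg]

theorem IsSymm.dotProduct_mulVec_comm {R : Type*} [CommSemiring R] {M : Matrix n n R}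
    (hM : M.IsSymm) (v w : n → R) : v ⬝ᵥ M *ᵥ w = w ⬝ᵥ M *ᵥ v := by
  rw [dotProduct_mulVec, ← mulVec_transpose, hM.eq, dotProduct_comm]

theorem PosDef.map_ofReal {M : Matrix n n ℝ} (hM : M.PosDef) : (M.map ofReal).PosDef := by
  refine posDef_iff_dotProduct_mulVec.mpr
    ⟨hM.isHermitian.map _ fun r => (conj_ofReal r).symm, fun x hx => ?_⟩
  have hsymm : M.IsSymm := hM.isHermitian
  rw [Complex.pos_iff, re_star_dotProduct_map_ofReal_mulVec, im_star_dotProduct_map_ofReal_mulVec]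
  refine ⟨?_, by rw [hsymm.dotProduct_mulVec_comm (re ∘ x), sub_self]⟩
  have hre_or_im : re ∘ x ≠ 0 ∨ im ∘ x ≠ 0 := by
    by_contra! h
    exact hx (funext fun i => Complex.ext (congrFun h.1 i) (congrFun h.2 i))
  have hnonneg : ∀ v : n → ℝ, 0 ≤ v ⬝ᵥ M *ᵥ v := hM.posSemidef.dotProduct_mulVec_nonneg
  rcases hre_or_im with h | h
  · exact add_pos_of_pos_of_nonneg (hM.dotProduct_mulVec_pos h) (hnonneg _)
  · exact add_pos_of_nonneg_of_pos (hnonneg _) (hM.dotProduct_mulVec_pos h)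

end Complexification

section Companion

variable {m R : Type*} [Fintype m] [DecidableEq m] [CommRing R]

theorem fromBlocks_zero_one_mulVec_eq_smul {P D : Matrix m m R} {v : m ⊕ m → R} {μ : R}
    (h : fromBlocks 0 1 (-P) (-D) *ᵥ v = μ • v) :
    v ∘ Sum.inr = μ • (v ∘ Sum.inl) ∧
      μ ^ 2 • (v ∘ Sum.inl) + μ • (D *ᵥ (v ∘ Sum.inl)) + P *ᵥ (v ∘ Sum.inl) = 0 := by
  rw [fromBlocks_mulVec] at h
  have hinr : v ∘ Sum.inr = μ • (v ∘ Sum.inl) := by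
    funext i; simpa using congrFun h (Sum.inl i)
  have hsecond : -P *ᵥ (v ∘ Sum.inl) + -D *ᵥ (v ∘ Sum.inr) = μ • (v ∘ Sum.inr) := by
    funext i; simpa using congrFun h (Sum.inr i)
  refine ⟨hinr, ?_⟩
  rw [hinr, mulVec_smul, neg_mulVec, neg_mulVec, smul_smul, ← pow_two] at hsecond
  linear_combination (norm := module) -hsecond

theorem exists_quadratic_eigenvector_of_hasEigenvalue {P D : Matrix m m R} {μ : R}
    (hμ : HasEigenvalue (toLin' (fromBlocks 0 1 (-P) (-D))) μ) :
    ∃ x ≠ 0, μ ^ 2 • x + μ • (D *ᵥ x) + P *ᵥ x = 0 := by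
  obtain ⟨v, hv⟩ := hμ.exists_hasEigenvector
  obtain ⟨hinr, hquad⟩ := fromBlocks_zero_one_mulVec_eq_smul (by simpa using hv.apply_eq_smul)
  refine ⟨v ∘ Sum.inl, fun hinl => hv.2 ?_, hquad⟩
  rw [hinl, smul_zero] at hinr
  funext i
  cases i with
  | inl i => exact congrFun hinl i
  | inr i => exact congrFun hinr i

end Companion

theorem re_neg_of_quadratic_eigenvector {n : Type*} [Fintype n] {P D : Matrix n n ℂ}
    (hP : P.PosDef) (hD : D.PosDef) {μ : ℂ} {x : n → ℂ} (hx : x ≠ 0)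
    (h : μ ^ 2 • x + μ • (D *ᵥ x) + P *ᵥ x = 0) : μ.re < 0 := by
  refine re_neg_of_quadratic_eq_zero (dotProduct_star_self_pos_iff.mpr hx)
    (hD.dotProduct_mulVec_pos hx) (hP.dotProduct_mulVec_pos hx) ?_
  simpa only [dotProduct_add, dotProduct_smul, smul_eq_mul, dotProduct_zero, mul_comm] using
    congrArg (star x ⬝ᵥ ·) h

end Matrix

/-- if `K_P`, `K_D` are real symmetric positive definite `n × n` matrices,
then the block matrix `A = [[0, I], [-K_P, -K_D]]` is Hurwitz: every eigenvalue of `A`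
over `ℂ` (i.e., every complex root of its characteristic polynomial) has strictly
negative real part. -/
theorem block_matrix_hurwitz {n : ℕ} (KP KD : Matrix (Fin n) (Fin n) ℝ)
    (hKP : KP.PosDef) (hKD : KD.PosDef) :
    ∀ μ : ℂ,
      ((Matrix.fromBlocks (0 : Matrix (Fin n) (Fin n) ℝ) (1 : Matrix (Fin n) (Fin n) ℝ)
            (-KP) (-KD)).map (Complex.ofReal)).charpoly.IsRoot μ →
        μ.re < 0 := by
  intro μ hμ
  rw [fromBlocks_map, Matrix.map_zero _ ofReal_zero, Matrix.map_one _ ofReal_zero ofReal_one,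
    Matrix.map_neg _ ofReal_neg, Matrix.map_neg _ ofReal_neg, ← charpoly_toLin',
    ← hasEigenvalue_iff_isRoot_charpoly] at hμ
  obtain ⟨x, hx, hquad⟩ := exists_quadratic_eigenvector_of_hasEigenvalue hμ
  exact re_neg_of_quadratic_eigenvector hKP.map_ofReal hKD.map_ofReal hx hquad
end

section
/- (Case (i) gain-adaptation inequality for the bipedal controller.) Let s ∈ ℝⁿ, ξ ∈ ℝ^{2n}, σ ∈ ℝⁿ, and reals α > 1, ε > 0, β₀*, β₁*, β̂₀, β̂₁ ≥ 0. Suppose ‖σ‖ ≤ β₀* + β₁*·‖ξ‖ and ‖s‖ ≥ √(ε/(α²−1)), and set c = β̂₀ + β̂₁·‖ξ‖. Then sᵀ( σ − α·c·s/√(‖s‖² + ε) ) + (β̂₀ − β₀*)·‖s‖ + (β̂₁ − β₁*)·‖ξ‖·‖s‖ ≤ 0. -/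
/-!
Cauchy–Schwarz bounds `sᵀσ` by `(β₀* + β₁*‖ξ‖)‖s‖`, so the left-hand side is at most
`c‖s‖ - α c ‖s‖² / √(‖s‖² + ε)`. The threshold on `‖s‖` is exactly `‖s‖² + ε ≤ α²‖s‖²`, i.e.
`√(‖s‖² + ε) ≤ α‖s‖`, and then the robust term `α c ‖s‖² / √(‖s‖² + ε)` is at least `c‖s‖`.
-/

open RealInnerProductSpace

theorem Real.sqrt_sq_add_le_mul_of_sqrt_div_le {x α ε : ℝ} (hα : 1 < α) (hx : 0 ≤ x)
    (h : √(ε / (α ^ 2 - 1)) ≤ x) : √(x ^ 2 + ε) ≤ α * x := by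
  have hα2 : 0 < α ^ 2 - 1 := by nlinarith
  have hε : ε ≤ (α ^ 2 - 1) * x ^ 2 := by
    rw [← div_le_iff₀' hα2]
    exact (Real.sqrt_le_iff.mp h).2
  rw [Real.sqrt_le_iff]
  exact ⟨by positivity, by linarith⟩

theorem mul_le_div_mul_sq_of_le_mul {c x q α : ℝ} (hc : 0 ≤ c) (hx : 0 ≤ x) (hq : 0 < q)
    (h : q ≤ α * x) : c * x ≤ α * c / q * x ^ 2 := by
  rw [div_mul_eq_mul_div, le_div_iff₀ hq]
  nlinarith [mul_le_mul_of_nonneg_left h (mul_nonneg hc hx)]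

section

variable {E : Type*} [NormedAddCommGroup E] [InnerProductSpace ℝ E]

theorem inner_sub_smul_self_right (s σ : E) (k : ℝ) :
    ⟪s, σ - k • s⟫ = ⟪s, σ⟫ - k * ‖s‖ ^ 2 := by
  rw [inner_sub_right, real_inner_smul_right, real_inner_self_eq_norm_sq]

theorem inner_sub_robust_add_sub_mul_norm_nonpos {s σ : E} {α ε b c : ℝ}
    (hα : 1 < α) (hε : 0 < ε) (hc : 0 ≤ c) (hσ : ‖σ‖ ≤ b)
    (hs : √(ε / (α ^ 2 - 1)) ≤ ‖s‖) :
    ⟪s, σ - (α * c / √(‖s‖ ^ 2 + ε)) • s⟫ + (c - b) * ‖s‖ ≤ 0 := by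
  have hq : 0 < √(‖s‖ ^ 2 + ε) := Real.sqrt_pos.mpr (by positivity)
  have hσs : ⟪s, σ⟫ ≤ b * ‖s‖ :=
    (real_inner_le_norm s σ).trans (by rw [mul_comm]; gcongr)
  have hrobust : c * ‖s‖ ≤ α * c / √(‖s‖ ^ 2 + ε) * ‖s‖ ^ 2 :=
    mul_le_div_mul_sq_of_le_mul hc (norm_nonneg s) hq
      (Real.sqrt_sq_add_le_mul_of_sqrt_div_le hα (norm_nonneg s) hs)
  rw [inner_sub_smul_self_right]
  linarith

end

theorem case_i_inequality_biped_general {n : ℕ}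
    (s σ : EuclideanSpace ℝ (Fin n)) (ξ : EuclideanSpace ℝ (Fin (2 * n)))
    (α ε βs₀ βs₁ βh₀ βh₁ : ℝ)
    (hα : 1 < α) (hε : 0 < ε)
    (hβh₀ : 0 ≤ βh₀) (hβh₁ : 0 ≤ βh₁)
    (hσ : ‖σ‖ ≤ βs₀ + βs₁ * ‖ξ‖)
    (hs : Real.sqrt (ε / (α ^ 2 - 1)) ≤ ‖s‖) :
    (inner ℝ s (σ - ((α * (βh₀ + βh₁ * ‖ξ‖)) / Real.sqrt (‖s‖ ^ 2 + ε)) • s) : ℝ) +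
        (βh₀ - βs₀) * ‖s‖ + (βh₁ - βs₁) * ‖ξ‖ * ‖s‖ ≤ 0 := by
  have hc : 0 ≤ βh₀ + βh₁ * ‖ξ‖ := by positivity
  have key := inner_sub_robust_add_sub_mul_norm_nonpos hα hε hc hσ hs
  linarith

/-- Case (i) gain-adaptation inequality for the bipedal controller:
with `c = β̂₀ + β̂₁‖ξ‖`, if `‖σ‖ ≤ β₀* + β₁*‖ξ‖` and `‖s‖ ≥ √(ε/(α²-1))`, then
`sᵀ(σ - α c s/√(‖s‖²+ε)) + (β̂₀ - β₀*)‖s‖ + (β̂₁ - β₁*)‖ξ‖‖s‖ ≤ 0`. -/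
theorem case_i_inequality_biped {n : ℕ}
    (s σ : EuclideanSpace ℝ (Fin n)) (ξ : EuclideanSpace ℝ (Fin (2 * n)))
    (α ε βs₀ βs₁ βh₀ βh₁ : ℝ)
    (hα : 1 < α) (hε : 0 < ε)
    (hβs₀ : 0 ≤ βs₀) (hβs₁ : 0 ≤ βs₁) (hβh₀ : 0 ≤ βh₀) (hβh₁ : 0 ≤ βh₁)
    (hσ : ‖σ‖ ≤ βs₀ + βs₁ * ‖ξ‖)
    (hs : Real.sqrt (ε / (α ^ 2 - 1)) ≤ ‖s‖) :
    (inner ℝ s (σ - ((α * (βh₀ + βh₁ * ‖ξ‖)) / Real.sqrt (‖s‖ ^ 2 + ε)) • s) : ℝ) +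
        (βh₀ - βs₀) * ‖s‖ + (βh₁ - βs₁) * ‖ξ‖ * ‖s‖ ≤ 0 :=
  case_i_inequality_biped_general s σ ξ α ε βs₀ βs₁ βh₀ βh₁ hα hε hβh₀ hβh₁ hσ hs
end
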